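/- On the ring of symmetric functions, with e_n multiplication by elementary symmetric functions and h*_m the skewing operator by h_m, one has: h*_m ∘ e_n = e_n ∘ h*_m + e_{n−1} ∘ h*_{m−1} for all m, n ≥ 1. -/

import Mathlib

open MvPolynomial PowerSeries

/-- A model of the ring `Λ` of symmetric functions over `ℚ`: the polynomial ring
`ℚ[p₁, p₂, …]` on the power sums, where the variable `X n` represents `p_{n+1}`. -/
abbrev Lam : Type := MvPolynomial ℕ ℚ

/-- The power sum `p_n ∈ Λ` (for `n ≥ 1`). -/
noncomputable def pVar (n : ℕ) : Lam := MvPolynomial.X (n - 1)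

/-- The exponential of a formal power series with vanishing constant term. -/
noncomputable def psExp (F : PowerSeries Lam) : PowerSeries Lam :=
  PowerSeries.mk fun N =>
    ∑ k ∈ Finset.range (N + 1), (k.factorial : ℚ)⁻¹ • PowerSeries.coeff N (F ^ k)

/-- The complete homogeneous symmetric function `h_n ∈ Λ`, defined via the generating
function `∑_{n≥0} h_n z^n = exp (∑_{n≥1} p_n z^n / n)`; in particular `h_0 = 1`. -/
noncomputable def hPoly (n : ℕ) : Lam :=
  PowerSeries.coeff n
    (psExp (PowerSeries.mk fun k => if k = 0 then 0 else (k : ℚ)⁻¹ • pVar k))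

/-- The quantity `z_λ = ∏ᵢ i^{mᵢ(λ)} mᵢ(λ)!` attached to the monomial `p_λ = ∏ p_i^{mᵢ}`. -/
noncomputable def zWeight (d : ℕ →₀ ℕ) : ℚ :=
  d.prod fun n k => ((n : ℚ) + 1) ^ k * (k.factorial : ℚ)

/-- The Hall inner product on `Λ`, for which `⟨p_λ, p_μ⟩ = z_λ δ_{λμ}` (equivalently, the
Schur functions form an orthonormal basis). -/
noncomputable def hallForm (f g : Lam) : ℚ :=
  ∑ d ∈ f.support, MvPolynomial.coeff d f * MvPolynomial.coeff d g * zWeight d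

/-- Multiplication by `h_n` as a linear operator on `Λ`. -/
noncomputable def hMul (n : ℕ) : Module.End ℚ Lam := LinearMap.mulLeft ℚ (hPoly n)

/-- The elementary symmetric function `e_n ∈ Λ`, defined via the generating function
`∑_{n≥0} e_n z^n = exp (∑_{n≥1} (-1)^{n-1} p_n z^n / n)`; in particular `e_0 = 1`. -/
noncomputable def ePoly (n : ℕ) : Lam :=
  PowerSeries.coeff n
    (psExp (PowerSeries.mk fun k =>
      if k = 0 then 0 else ((-1 : ℚ) ^ (k - 1) * (k : ℚ)⁻¹) • pVar k))

/-- Multiplication by `e_n` as a linear operator on `Λ`. -/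
noncomputable def eMul (n : ℕ) : Module.End ℚ Lam := LinearMap.mulLeft ℚ (ePoly n)

/-!
Adjoining one variable `w` to the alphabet, `f ↦ f(x, w)`, is the algebra map `p_k ↦ p_k + w^k`
into `Λ[w]`, and its `w^m`-coefficient is `h_m^⊥`: it is adjoint to multiplication by `h_m`,
because `k ∂/∂p_k` is adjoint to multiplication by `p_k` and `k ∂h_m/∂p_k = h_{m-k}`.
From `k ∂e_n/∂p_k = (-1)^(k-1) e_{n-k}` and the chain rule in `w` one gets, by induction,
`e_n(x, w) = e_n(x) + w e_{n-1}(x)`; the relation is the `w^m`-coefficient of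
`e_n(x, w) f(x, w)`.
-/

lemma hallForm_eq_sum_of_support_subset {f : Lam} (g : Lam) {s : Finset (ℕ →₀ ℕ)}
    (hs : f.support ⊆ s) :
    hallForm f g = ∑ d ∈ s, MvPolynomial.coeff d f * MvPolynomial.coeff d g * zWeight d := by
  refine Finset.sum_subset hs fun d _ hd => ?_
  rw [MvPolynomial.notMem_support_iff.mp hd, zero_mul, zero_mul]

lemma hallForm_comm (f g : Lam) : hallForm f g = hallForm g f := by
  rw [hallForm_eq_sum_of_support_subset g Finset.subset_union_left,
    hallForm_eq_sum_of_support_subset f (Finset.subset_union_right (s₁ := f.support))]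
  exact Finset.sum_congr rfl fun d _ => by ring

lemma hallForm_add_left (f f' g : Lam) :
    hallForm (f + f') g = hallForm f g + hallForm f' g := by
  rw [hallForm_eq_sum_of_support_subset g MvPolynomial.support_add,
    hallForm_eq_sum_of_support_subset g Finset.subset_union_left,
    hallForm_eq_sum_of_support_subset g (Finset.subset_union_right (s₁ := f.support)),
    ← Finset.sum_add_distrib]
  exact Finset.sum_congr rfl fun d _ => by rw [MvPolynomial.coeff_add]; ring

lemma hallForm_add_right (f g g' : Lam) :
    hallForm f (g + g') = hallForm f g + hallForm f g' := by
  rw [hallForm_comm, hallForm_add_left, hallForm_comm g, hallForm_comm g']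

lemma hallForm_smul_left (c : ℚ) (f g : Lam) : hallForm (c • f) g = c * hallForm f g := by
  rw [hallForm_eq_sum_of_support_subset g MvPolynomial.support_smul, hallForm, Finset.mul_sum]
  exact Finset.sum_congr rfl fun d _ => by rw [MvPolynomial.coeff_smul, smul_eq_mul]; ring

lemma hallForm_zero_left (g : Lam) : hallForm 0 g = 0 := by
  simp [hallForm]

lemma hallForm_monomial_left (d : ℕ →₀ ℕ) (a : ℚ) (g : Lam) :
    hallForm (MvPolynomial.monomial d a) g = a * MvPolynomial.coeff d g * zWeight d := by
  rw [hallForm_eq_sum_of_support_subset g MvPolynomial.support_monomial_subset,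
    Finset.sum_singleton, MvPolynomial.coeff_monomial, if_pos rfl]

lemma hallForm_C_left (a : ℚ) (g : Lam) :
    hallForm (MvPolynomial.C a) g = a * MvPolynomial.constantCoeff g := by
  rw [MvPolynomial.C_apply, hallForm_monomial_left, zWeight, Finsupp.prod_zero_index, mul_one,
    MvPolynomial.constantCoeff_eq]

lemma zWeight_ne_zero (d : ℕ →₀ ℕ) : zWeight d ≠ 0 :=
  Finset.prod_ne_zero_iff.mpr fun n _ => by positivity

/-- Testing against the monomial `p_d` recovers a coefficient: `⟨f, p_d⟩ = z_d · [p_d] f`. -/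
lemma eq_of_hallForm_eq {u v : Lam} (h : ∀ g, hallForm u g = hallForm v g) : u = v := by
  ext d
  have hd := h (MvPolynomial.monomial d 1)
  rw [hallForm_comm u, hallForm_comm v, hallForm_monomial_left, hallForm_monomial_left] at hd
  exact mul_right_cancel₀ (zWeight_ne_zero d) (by simpa using hd)

lemma zWeight_add_single (d : ℕ →₀ ℕ) (i : ℕ) :
    zWeight (d + Finsupp.single i 1) = ((i : ℚ) + 1) * ((d i : ℚ) + 1) * zWeight d := by
  set s := insert i d.support
  have hd : d.support ⊆ s := Finset.subset_insert _ _
  have hd' : (d + Finsupp.single i 1).support ⊆ s :=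
    Finsupp.support_add.trans (Finset.union_subset hd (Finsupp.support_single_subset.trans
      (Finset.singleton_subset_iff.mpr (Finset.mem_insert_self _ _))))
  have hi : i ∈ s := Finset.mem_insert_self _ _
  rw [zWeight, zWeight, Finsupp.prod_of_support_subset _ hd' _ (by simp),
    Finsupp.prod_of_support_subset _ hd _ (by simp), ← Finset.mul_prod_erase s _ hi,
    ← Finset.mul_prod_erase s _ hi]
  have hrest : ∀ n ∈ s.erase i, (d + Finsupp.single i 1 : ℕ →₀ ℕ) n = d n :=
    fun n hn => by simp [Ne.symm (Finset.ne_of_mem_erase hn)]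
  rw [Finset.prod_congr rfl fun n hn => by rw [hrest n hn]]
  simp only [Finsupp.add_apply, Finsupp.single_eq_same, pow_succ, Nat.factorial_succ]
  push_cast
  ring

lemma hallForm_smul_pderiv_left (i : ℕ) (f g : Lam) :
    hallForm (((i : ℚ) + 1) • pderiv i f) g
      = hallForm f (MvPolynomial.X i * g) := by
  induction f using MvPolynomial.induction_on' with
  | monomial e a =>
    rw [MvPolynomial.pderiv_monomial, hallForm_smul_left, hallForm_monomial_left,
      hallForm_monomial_left, MvPolynomial.coeff_X_mul']
    by_cases hei : e i = 0
    · rw [if_neg (by simpa using hei), hei]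
      simp
    · rw [if_pos (Finsupp.mem_support_iff.mpr hei)]
      obtain ⟨d, rfl⟩ : ∃ d, e = d + Finsupp.single i 1 :=
        ⟨e - Finsupp.single i 1,
          (tsub_add_cancel_of_le (by simpa [Nat.one_le_iff_ne_zero])).symm⟩
      rw [add_tsub_cancel_right, zWeight_add_single]
      simp only [Finsupp.add_apply, Finsupp.single_eq_same]
      push_cast
      ring
  | add p q hp hq =>
    rw [map_add, smul_add, hallForm_add_left, hallForm_add_left, hp, hq]

lemma hallForm_X_mul_left (i : ℕ) (f g : Lam) :
    hallForm (MvPolynomial.X i * f) g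
      = hallForm f (((i : ℚ) + 1) • pderiv i g) := by
  rw [hallForm_comm, ← hallForm_smul_pderiv_left, hallForm_comm]

/-- The series `∑_{k ≥ 1} c_k p_k z^k`; `h_n` and `e_n` are the coefficients of its exponential
for `c_k = 1/k` and `c_k = (-1)^(k-1)/k`. -/
noncomputable def powerSumSeries (c : ℕ → ℚ) : PowerSeries Lam :=
  PowerSeries.mk fun k => if k = 0 then 0 else c k • pVar k

lemma hPoly_eq_coeff_psExp (m : ℕ) :
    hPoly m = PowerSeries.coeff m (psExp (powerSumSeries fun k => (k : ℚ)⁻¹)) := rfl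

lemma ePoly_eq_coeff_psExp (n : ℕ) :
    ePoly n = PowerSeries.coeff n
      (psExp (powerSumSeries fun k => (-1 : ℚ) ^ (k - 1) * (k : ℚ)⁻¹)) := rfl

lemma constantCoeff_powerSumSeries (c : ℕ → ℚ) :
    PowerSeries.constantCoeff (powerSumSeries c) = 0 := by
  simp [← PowerSeries.coeff_zero_eq_constantCoeff_apply, powerSumSeries]

lemma coeff_zero_psExp (F : PowerSeries Lam) : PowerSeries.coeff 0 (psExp F) = 1 := by
  simp [psExp]

lemma coeff_psExp_eq_sum_range {F : PowerSeries Lam} (hF : PowerSeries.constantCoeff F = 0)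
    {N M : ℕ} (hNM : N ≤ M) :
    PowerSeries.coeff N (psExp F)
      = ∑ k ∈ Finset.range (M + 1),
          (k.factorial : ℚ)⁻¹ • PowerSeries.coeff N (F ^ k) := by
  rw [psExp, PowerSeries.coeff_mk]
  refine Finset.sum_subset (Finset.range_subset_range.mpr (by omega)) fun k _ hk => ?_
  have hNk : (N : ℕ∞) < k := by simpa using hk
  rw [PowerSeries.coeff_of_lt_order _
    ((PowerSeries.le_order_pow_of_constantCoeff_eq_zero k hF).trans_lt' hNk), smul_zero]

/-- The partial derivative `∂/∂p_{i+1}` applied coefficientwise to power series over `Λ`. -/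
noncomputable def pderivSeries (i : ℕ) : Derivation ℚ (PowerSeries Lam) (PowerSeries Lam) :=
  Derivation.mk'
    { toFun := fun F => PowerSeries.mk fun n => pderiv i (PowerSeries.coeff n F)
      map_add' := fun F G => PowerSeries.ext fun n => by simp
      map_smul' := fun c F => PowerSeries.ext fun n => by simp }
    fun F G => PowerSeries.ext fun n => by
      simp only [LinearMap.coe_mk, AddHom.coe_mk, PowerSeries.coeff_mk, smul_eq_mul,
        mul_comm G, map_add, PowerSeries.coeff_mul, map_sum, Derivation.leibniz,
        ← Finset.sum_add_distrib]
      exact Finset.sum_congr rfl fun p _ => by ring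

lemma coeff_pderivSeries (i n : ℕ) (F : PowerSeries Lam) :
    PowerSeries.coeff n (pderivSeries i F) = pderiv i (PowerSeries.coeff n F) := by
  simp [pderivSeries]

lemma pderivSeries_powerSumSeries (i : ℕ) (c : ℕ → ℚ) :
    pderivSeries i (powerSumSeries c) = c (i + 1) • PowerSeries.X ^ (i + 1) := by
  refine PowerSeries.ext fun n => ?_
  rw [coeff_pderivSeries, powerSumSeries, PowerSeries.coeff_mk, PowerSeries.coeff_smul,
    PowerSeries.coeff_X_pow]
  rcases n with _ | j
  · simp
  · simp only [Nat.succ_ne_zero, if_false, pVar, Nat.add_sub_cancel, Derivation.map_smul,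
      MvPolynomial.pderiv_X, Pi.single_apply, add_left_inj]
    split_ifs with h
    · subst h; simp
    · simp

lemma pderiv_coeff_psExp_powerSumSeries (c : ℕ → ℚ) (i m : ℕ) :
    pderiv i (PowerSeries.coeff m (psExp (powerSumSeries c)))
      = if i + 1 ≤ m then c (i + 1) • PowerSeries.coeff (m - (i + 1)) (psExp (powerSumSeries c))
        else 0 := by
  set F := powerSumSeries c
  have hF : PowerSeries.constantCoeff F = 0 := constantCoeff_powerSumSeries c
  have hterm (k : ℕ) :
      pderiv i (((k + 1).factorial : ℚ)⁻¹ • PowerSeries.coeff m (F ^ (k + 1)))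
        = c (i + 1) • (k.factorial : ℚ)⁻¹ •
          if i + 1 ≤ m then PowerSeries.coeff (m - (i + 1)) (F ^ k) else 0 := by
    rw [Derivation.map_smul, ← coeff_pderivSeries, Derivation.leibniz_pow,
      pderivSeries_powerSumSeries, Nat.add_sub_cancel, smul_eq_mul, mul_smul_comm,
      ← Nat.cast_smul_eq_nsmul ℚ, smul_smul, LinearMap.map_smul_of_tower,
      PowerSeries.coeff_mul_X_pow',
      smul_smul, smul_smul, Nat.factorial_succ]
    congr 1
    push_cast
    field_simp
  have hconst : pderiv i (PowerSeries.coeff m (1 : PowerSeries Lam)) = 0 := by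
    rw [PowerSeries.coeff_one]
    split_ifs <;> simp
  rw [coeff_psExp_eq_sum_range hF le_rfl, map_sum, Finset.sum_range_succ',
    Finset.sum_congr rfl fun k _ => hterm k, pow_zero, Derivation.map_smul, hconst, smul_zero,
    add_zero]
  split_ifs with him
  · rw [coeff_psExp_eq_sum_range hF (show m - (i + 1) ≤ m - 1 by omega),
      Nat.sub_add_cancel (by omega : 1 ≤ m), Finset.smul_sum]
  · simp

lemma smul_pderiv_hPoly (i m : ℕ) :
    ((i : ℚ) + 1) • pderiv i (hPoly m)
      = if i + 1 ≤ m then hPoly (m - (i + 1)) else 0 := by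
  rw [hPoly_eq_coeff_psExp, pderiv_coeff_psExp_powerSumSeries]
  split_ifs
  · rw [smul_smul, ← hPoly_eq_coeff_psExp, Nat.cast_succ, mul_inv_cancel₀ (by positivity),
      one_smul]
  · rw [smul_zero]

lemma smul_pderiv_ePoly (i n : ℕ) :
    ((i : ℚ) + 1) • pderiv i (ePoly n)
      = if i + 1 ≤ n then (-1 : ℚ) ^ i • ePoly (n - (i + 1)) else 0 := by
  rw [ePoly_eq_coeff_psExp, pderiv_coeff_psExp_powerSumSeries]
  split_ifs
  · rw [smul_smul, ← ePoly_eq_coeff_psExp, Nat.add_sub_cancel, Nat.cast_succ,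
      mul_left_comm, mul_inv_cancel₀ (by positivity), mul_one]
  · rw [smul_zero]

lemma ePoly_zero : ePoly 0 = 1 := coeff_zero_psExp _

lemma constantCoeff_coeff_psExp {F : PowerSeries Lam}
    (hF : PowerSeries.map MvPolynomial.constantCoeff F = 0) (m : ℕ) :
    MvPolynomial.constantCoeff (PowerSeries.coeff m (psExp F)) = if m = 0 then 1 else 0 := by
  have hpow (k : ℕ) : MvPolynomial.constantCoeff (PowerSeries.coeff m (F ^ k))
      = if k = 0 then (if m = 0 then 1 else 0) else 0 := by
    rw [← PowerSeries.coeff_map, map_pow, hF]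
    rcases k with _ | k
    · simp [PowerSeries.coeff_one]
    · simp
  simp [psExp, MvPolynomial.smul_eq_C_mul, hpow]

lemma constantCoeff_hPoly (m : ℕ) :
    MvPolynomial.constantCoeff (hPoly m) = if m = 0 then 1 else 0 := by
  refine constantCoeff_coeff_psExp (PowerSeries.ext fun k => ?_) m
  rcases k with _ | k <;> simp [pVar, MvPolynomial.smul_eq_C_mul]

theorem Polynomial.derivative_aeval_eq_sum_of_mem_supported {σ R A : Type*} [CommSemiring R]
    [CommSemiring A] [Algebra R A] (φ : MvPolynomial σ R →ₐ[R] Polynomial A) {s : Finset σ}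
    {f : MvPolynomial σ R} (hf : f ∈ MvPolynomial.supported R (s : Set σ)) :
    derivative (φ f) = ∑ i ∈ s, φ (pderiv i f) * derivative (φ (MvPolynomial.X i)) := by
  classical
  rw [MvPolynomial.supported_eq_adjoin_X] at hf
  induction hf using Algebra.adjoin_induction with
  | mem x hx =>
    obtain ⟨j, hj, rfl⟩ := hx
    simp [MvPolynomial.pderiv_X, Pi.single_apply, show j ∈ s from hj]
  | algebraMap r => simp [Polynomial.algebraMap_apply]
  | add x y _ _ hx hy => simp only [map_add, hx, hy, add_mul, Finset.sum_add_distrib]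
  | mul x y _ _ hx hy =>
    simp only [map_mul, derivative_mul, hx, hy, Derivation.leibniz, smul_eq_mul, map_add,
      add_mul, Finset.sum_add_distrib, Finset.mul_sum, Finset.sum_mul]
    rw [add_comm]
    congr 1 <;> exact Finset.sum_congr rfl fun i _ => by ring

theorem Polynomial.derivative_aeval_eq_sum {σ R A : Type*} [CommSemiring R] [CommSemiring A]
    [Algebra R A] (φ : MvPolynomial σ R →ₐ[R] Polynomial A) {s : Finset σ}
    {f : MvPolynomial σ R} (hs : ∀ i ∉ s, pderiv i f = 0) :
    derivative (φ f) = ∑ i ∈ s, φ (pderiv i f) * derivative (φ (MvPolynomial.X i)) := by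
  classical
  have hvars : ∀ i ∉ f.vars, pderiv i f = 0 :=
    fun i hi => MvPolynomial.pderiv_eq_zero_of_notMem_vars hi
  rw [derivative_aeval_eq_sum_of_mem_supported φ (MvPolynomial.mem_supported.mpr subset_rfl),
    Finset.sum_subset (Finset.subset_union_left (s₂ := s)) fun i _ hi => by simp [hvars i hi],
    ← Finset.sum_subset (Finset.subset_union_right (s₁ := f.vars))
      fun i _ hi => by simp [hs i hi]]

/-- `f ↦ f(x, w)`: adjoining one variable `w` to the alphabet sends `p_k` to `p_k + w^k`. -/
noncomputable def addVariable : Lam →ₐ[ℚ] Polynomial Lam :=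
  MvPolynomial.aeval fun k => Polynomial.C (MvPolynomial.X k) + Polynomial.X ^ (k + 1)

lemma addVariable_X (k : ℕ) :
    addVariable (MvPolynomial.X k) = Polynomial.C (MvPolynomial.X k) + Polynomial.X ^ (k + 1) :=
  MvPolynomial.aeval_X _ k

lemma derivative_addVariable_X (k : ℕ) :
    Polynomial.derivative (addVariable (MvPolynomial.X k))
      = ((k : ℚ) + 1) • Polynomial.X ^ k := by
  rw [addVariable_X, map_add, Polynomial.derivative_C, zero_add, Polynomial.derivative_X_pow,
    Nat.add_sub_cancel, ← Nat.cast_succ, Polynomial.C_eq_natCast, ← nsmul_eq_mul,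
    ← Nat.cast_smul_eq_nsmul ℚ]

lemma coeff_zero_addVariable (f : Lam) : (addVariable f).coeff 0 = f := by
  have h : Polynomial.constantCoeff.comp addVariable.toRingHom = RingHom.id Lam :=
    MvPolynomial.ringHom_ext (fun r => by simp [Polynomial.algebraMap_apply])
      fun k => by simp [addVariable_X]
  exact DFunLike.congr_fun h f

lemma addVariable_eq_of_derivative_eq_C {f g : Lam}
    (h : Polynomial.derivative (addVariable f) = Polynomial.C g) :
    addVariable f = Polynomial.C f + Polynomial.C g * Polynomial.X := by
  have h0 : Polynomial.derivative (addVariable f - Polynomial.C g * Polynomial.X) = 0 := by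
    simp [h]
  have := Polynomial.eq_C_of_derivative_eq_zero h0
  rw [Polynomial.coeff_sub, coeff_zero_addVariable, Polynomial.mul_coeff_zero,
    Polynomial.coeff_X_zero, mul_zero, sub_zero] at this
  exact sub_eq_iff_eq_add.mp this

lemma derivative_addVariable_ePoly_succ (n : ℕ) :
    Polynomial.derivative (addVariable (ePoly (n + 1)))
      = ∑ i ∈ Finset.range (n + 1), (-Polynomial.X) ^ i * addVariable (ePoly (n - i)) := by
  have hs : ∀ i ∉ Finset.range (n + 1), pderiv i (ePoly (n + 1)) = 0 := by
    intro i hi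
    have h := smul_pderiv_ePoly i (n + 1)
    rw [if_neg (by simpa using hi), smul_eq_zero] at h
    exact h.resolve_left (by positivity)
  rw [Polynomial.derivative_aeval_eq_sum addVariable hs]
  refine Finset.sum_congr rfl fun i hi => ?_
  have hin : i + 1 ≤ n + 1 := by simpa using hi
  rw [derivative_addVariable_X, mul_smul_comm, ← smul_mul_assoc, ← map_smul, smul_pderiv_ePoly,
    if_pos hin, map_smul, Nat.add_sub_add_right, neg_pow (Polynomial.X : Polynomial Lam),
    Algebra.smul_def, map_pow, map_neg, map_one]
  ring

/-- The alternating sums `∑_{i ≤ n} (-w)^i e_{n-i}(x, w)` telescope, since `e_j(x, w)` is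
determined by its `w`-derivative, which is the previous such sum. -/
lemma sum_range_neg_X_pow_mul_addVariable_ePoly (n : ℕ) :
    ∑ i ∈ Finset.range (n + 1), (-Polynomial.X) ^ i * addVariable (ePoly (n - i))
      = Polynomial.C (ePoly n) := by
  induction n with
  | zero => simp [ePoly_zero]
  | succ n ih =>
    have hstep := addVariable_eq_of_derivative_eq_C (derivative_addVariable_ePoly_succ n ▸ ih)
    have hshift : ∀ i ∈ Finset.range (n + 1),
        (-Polynomial.X) ^ (i + 1) * addVariable (ePoly (n + 1 - (i + 1)))
          = -Polynomial.X * ((-Polynomial.X) ^ i * addVariable (ePoly (n - i))) := fun i _ => by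
      rw [Nat.add_sub_add_right, pow_succ]
      ring
    rw [Finset.sum_range_succ', Finset.sum_congr rfl hshift, ← Finset.mul_sum, ih, Nat.sub_zero,
      hstep]
    ring

theorem addVariable_ePoly_succ (n : ℕ) :
    addVariable (ePoly (n + 1))
      = Polynomial.C (ePoly (n + 1)) + Polynomial.C (ePoly n) * Polynomial.X :=
  addVariable_eq_of_derivative_eq_C
    ((derivative_addVariable_ePoly_succ n).trans (sum_range_neg_X_pow_mul_addVariable_ePoly n))

/-- The skewing operator `h_m^⊥`, realised as `f ↦ [w^m] f(x, w)`. -/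
noncomputable def hSkew (m : ℕ) : Module.End ℚ Lam :=
  (Polynomial.lcoeff Lam m).restrictScalars ℚ ∘ₗ addVariable.toLinearMap

lemma hSkew_apply (m : ℕ) (f : Lam) : hSkew m f = (addVariable f).coeff m := rfl

lemma hSkew_mul_X (m i : ℕ) (f : Lam) :
    hSkew m (f * MvPolynomial.X i)
      = MvPolynomial.X i * hSkew m f + if i + 1 ≤ m then hSkew (m - (i + 1)) f else 0 := by
  rw [hSkew_apply, map_mul, addVariable_X, mul_add, Polynomial.coeff_add, Polynomial.coeff_mul_C,
    Polynomial.coeff_mul_X_pow', mul_comm, hSkew_apply]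
  split_ifs <;> rfl

theorem hallForm_hSkew (m : ℕ) (f g : Lam) :
    hallForm (hSkew m f) g = hallForm f (hPoly m * g) := by
  induction f using MvPolynomial.induction_on generalizing m g with
  | C a =>
    rw [hSkew_apply, ← MvPolynomial.algebraMap_eq, AlgHom.commutes, Polynomial.algebraMap_apply,
      Polynomial.coeff_C, MvPolynomial.algebraMap_eq, hallForm_C_left, map_mul, constantCoeff_hPoly]
    split_ifs
    · rw [hallForm_C_left, one_mul]
    · rw [hallForm_zero_left, zero_mul, mul_zero]
  | add p q hp hq => rw [map_add, hallForm_add_left, hallForm_add_left, hp, hq]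
  | mul_X p i hp =>
    have hleib : ((i : ℚ) + 1) • pderiv i (hPoly m * g)
        = hPoly m * (((i : ℚ) + 1) • pderiv i g)
          + (if i + 1 ≤ m then hPoly (m - (i + 1)) else 0) * g := by
      rw [← smul_pderiv_hPoly, Derivation.leibniz, smul_add, smul_eq_mul, smul_eq_mul,
        mul_smul_comm, smul_mul_assoc, mul_comm g]
    rw [hSkew_mul_X, hallForm_add_left, hallForm_X_mul_left, hp, mul_comm p,
      hallForm_X_mul_left, hleib, hallForm_add_right]
    congr 1
    split_ifs
    · rw [hp]
    · rw [hallForm_zero_left, zero_mul, hallForm_comm, hallForm_zero_left]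

theorem eq_hSkew_of_hallForm_adjoint (D : Module.End ℚ Lam) (m : ℕ)
    (hD : ∀ f g, hallForm (D f) g = hallForm f (hPoly m * g)) : D = hSkew m :=
  LinearMap.ext fun f => eq_of_hallForm_eq fun g => by rw [hD, hallForm_hSkew]

theorem hSkew_mul_ePoly_succ (m n : ℕ) (f : Lam) :
    hSkew (m + 1) (ePoly (n + 1) * f) = ePoly (n + 1) * hSkew (m + 1) f + ePoly n * hSkew m f := by
  rw [hSkew_apply, map_mul, addVariable_ePoly_succ, add_mul, Polynomial.coeff_add,
    Polynomial.coeff_C_mul, mul_assoc, Polynomial.coeff_C_mul, Polynomial.coeff_X_mul]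
  rfl

/-- Let `e_n` denote multiplication by the elementary symmetric function `e_n` on `Λ`, and
let `h*_m` be the skewing operator by `h_m`, i.e. the adjoint of multiplication by `h_m`
with respect to the Hall inner product.  Then for all `m, n ≥ 1`:
`h*_m ∘ e_n = e_n ∘ h*_m + e_{n-1} ∘ h*_{m-1}` (with `h*_0 = id`; note that the adjointness
hypothesis forces `h*_0 = id`). -/
theorem hstar_comp_e_commutation_relation
    (hstar : ℕ → Module.End ℚ Lam)
    (hadj : ∀ (m : ℕ) (f g : Lam), hallForm (hstar m f) g = hallForm f (hPoly m * g))
    (m n : ℕ) (hm : 1 ≤ m) (hn : 1 ≤ n) :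
    hstar m * eMul n = eMul n * hstar m + eMul (n - 1) * hstar (m - 1) := by
  have hstar_eq (k : ℕ) : hstar k = hSkew k := eq_hSkew_of_hallForm_adjoint _ k (hadj k)
  obtain ⟨m, rfl⟩ := Nat.exists_eq_add_of_le' hm
  obtain ⟨n, rfl⟩ := Nat.exists_eq_add_of_le' hn
  refine LinearMap.ext fun f => ?_
  simp only [hstar_eq, Nat.add_sub_cancel, LinearMap.add_apply, Module.End.mul_apply, eMul,
    LinearMap.mulLeft_apply, hSkew_mul_ePoly_succ]
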